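/- arXiv:1312.2338 — 5 statements merged into one kernel-verified Lean document; each statement's English description precedes it below -/
import Mathlib

section
/- For positive reals P_1, P_2, the quantity α = (P_1/P_2)·((−1+√(1+P_2+P_1 P_2))/(1+P_1))² satisfies the coexistence equation (√P_1 + √(α P_2))² / (1 + (1−α)P_2) = P_1, and moreover 0 ≤ α ≤ 1. -/
/-! Put `t = (-1 + √(1 + (1 + P₁) P₂)) / (1 + P₁)`, the nonnegative root of
`(1 + P₁) t² + 2 t = P₂`, so that `α = P₁ t² / P₂` and `√(α P₂) = t √P₁`. The numerator of the
coexistence ratio is then `P₁ (1 + t)²`, while the quadratic rewrites the denominator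
`1 + P₂ - P₁ t²` as `(1 + t)²`. The same quadratic gives `P₁ t² ≤ P₂`, i.e. `α ≤ 1`. -/

noncomputable def quadRoot (a b : ℝ) : ℝ := (-1 + √(1 + a * b)) / a

theorem quadRoot_nonneg {a b : ℝ} (ha : 0 < a) (hb : 0 ≤ b) : 0 ≤ quadRoot a b := by
  have : 1 ≤ √(1 + a * b) := Real.one_le_sqrt.mpr (by nlinarith)
  unfold quadRoot
  exact div_nonneg (by linarith) ha.le

theorem quadRoot_spec {a b : ℝ} (ha : a ≠ 0) (hdisc : 0 ≤ 1 + a * b) :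
    a * quadRoot a b ^ 2 + 2 * quadRoot a b = b := by
  have hsq := Real.sq_sqrt hdisc
  unfold quadRoot
  field_simp
  linear_combination hsq

theorem relay_ratio_coexistence_of_quadratic {P₁ P₂ t : ℝ} (hP₁ : 0 ≤ P₁) (hP₂ : 0 < P₂)
    (ht : 0 ≤ t) (hquad : (1 + P₁) * t ^ 2 + 2 * t = P₂) :
    (√P₁ + √(P₁ / P₂ * t ^ 2 * P₂)) ^ 2 / (1 + (1 - P₁ / P₂ * t ^ 2) * P₂) = P₁ ∧
      0 ≤ P₁ / P₂ * t ^ 2 ∧ P₁ / P₂ * t ^ 2 ≤ 1 := by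
  have hαP₂ : P₁ / P₂ * t ^ 2 * P₂ = P₁ * t ^ 2 := by field_simp
  have hnum : (√P₁ + √(P₁ * t ^ 2)) ^ 2 = P₁ * (1 + t) ^ 2 := by
    rw [Real.sqrt_mul hP₁, Real.sqrt_sq ht]
    linear_combination (1 + t) ^ 2 * Real.sq_sqrt hP₁
  have hden : 1 + (1 - P₁ / P₂ * t ^ 2) * P₂ = (1 + t) ^ 2 := by
    rw [sub_mul, hαP₂]
    linear_combination -hquad
  refine ⟨?_, by positivity, ?_⟩
  · rw [hαP₂, hnum, hden]
    field_simp
  · rw [div_mul_eq_mul_div, div_le_one hP₂]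
    nlinarith

/-- The SISO relay ratio α = (P₁/P₂)·((−1+√(1+P₂+P₁P₂))/(1+P₁))² satisfies the
coexistence equation (√P₁ + √(αP₂))²/(1+(1−α)P₂) = P₁ and 0 ≤ α ≤ 1. -/
theorem siso_relay_ratio_coexistence (P₁ P₂ : ℝ) (h₁ : 0 < P₁) (h₂ : 0 < P₂) :
    let α := (P₁ / P₂) * ((-1 + Real.sqrt (1 + P₂ + P₁ * P₂)) / (1 + P₁)) ^ 2
    (Real.sqrt P₁ + Real.sqrt (α * P₂)) ^ 2 / (1 + (1 - α) * P₂) = P₁ ∧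
      0 ≤ α ∧ α ≤ 1 := by
  have hdisc : 1 + P₂ + P₁ * P₂ = 1 + (1 + P₁) * P₂ := by ring
  have hP₁' : 0 < 1 + P₁ := by linarith
  rw [hdisc]
  exact relay_ratio_coexistence_of_quadratic h₁.le h₂ (quadRoot_nonneg hP₁' h₂.le)
    (quadRoot_spec hP₁'.ne' (by positivity))
end

section
/- The SISO relay ratio α(P_1, P_2) = (P_1/P_2)·((−1+√(1+P_2+P_1 P_2))/(1+P_1))² is nondecreasing in P_1 for each fixed P_2 > 0. -/
/-! With `s = √(1 + P₂(1 + P₁))` we have `s² - 1 = P₂(1 + P₁)`, so the factor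
`(s - 1)/(1 + P₁)` equals `P₂/(1 + s)` and `α = P₁P₂/(1 + s)² = 1 - 2/(1 + s) - P₂/(1 + s)²`.
This is increasing in `s`, and `s` is increasing in `P₁`. -/

open Real Set

/-- The relay power fraction `α(P₁, P₂)` of the SISO cognitive channel. -/
noncomputable def sisoRelayRatio (P₁ P₂ : ℝ) : ℝ :=
  (P₁ / P₂) * ((-1 + √(1 + P₂ + P₁ * P₂)) / (1 + P₁)) ^ 2

lemma neg_one_add_div_eq_div_one_add {s a b : ℝ} (hs : s ^ 2 = 1 + a * b) (ha : a ≠ 0)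
    (h : 1 + s ≠ 0) : (-1 + s) / a = b / (1 + s) := by
  rw [div_eq_div_iff ha h]
  linear_combination hs

lemma sisoRelayRatio_eq {P₁ P₂ : ℝ} (h₁ : -1 < P₁) (h₂ : 0 ≤ P₂) :
    sisoRelayRatio P₁ P₂ =
      1 - 2 / (1 + √(1 + P₂ + P₁ * P₂)) - P₂ / (1 + √(1 + P₂ + P₁ * P₂)) ^ 2 := by
  set s := √(1 + P₂ + P₁ * P₂) with hs_def
  have hs_sq : s ^ 2 = 1 + (1 + P₁) * P₂ := by
    rw [hs_def, sq_sqrt (by nlinarith)]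
    ring
  have hs : 0 < 1 + s := by positivity
  have hP₂ : P₁ / P₂ * P₂ ^ 2 = P₁ * P₂ := by
    rcases eq_or_ne P₂ 0 with rfl | hP₂
    · simp
    · field_simp
  rw [sisoRelayRatio, ← hs_def,
    neg_one_add_div_eq_div_one_add hs_sq (by linarith) hs.ne', div_pow, ← mul_div_assoc, hP₂]
  field_simp
  linear_combination -hs_sq

lemma one_sub_two_div_sub_div_sq_le {c s t : ℝ} (hc : 0 ≤ c) (hs : 0 ≤ s) (hst : s ≤ t) :
    1 - 2 / (1 + s) - c / (1 + s) ^ 2 ≤ 1 - 2 / (1 + t) - c / (1 + t) ^ 2 := by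
  gcongr

lemma monotoneOn_sisoRelayRatio {P₂ : ℝ} (h₂ : 0 ≤ P₂) :
    MonotoneOn (sisoRelayRatio · P₂) (Ioi (-1)) := by
  intro P₁ h₁ P₁' h₁' h
  simp only [mem_Ioi] at h₁ h₁'
  dsimp only
  rw [sisoRelayRatio_eq h₁ h₂, sisoRelayRatio_eq h₁' h₂]
  exact one_sub_two_div_sub_div_sq_le h₂ (sqrt_nonneg _) (sqrt_le_sqrt (by nlinarith))

/-- The SISO relay ratio α(P₁,P₂) = (P₁/P₂)·((−1+√(1+P₂+P₁P₂))/(1+P₁))² is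
nondecreasing in P₁ for each fixed P₂ > 0. -/
theorem siso_relay_ratio_mono_P1 (P₂ : ℝ) (h₂ : 0 < P₂)
    (P₁ P₁' : ℝ) (h₁ : 0 < P₁) (h : P₁ ≤ P₁') :
    (P₁ / P₂) * ((-1 + Real.sqrt (1 + P₂ + P₁ * P₂)) / (1 + P₁)) ^ 2 ≤
      (P₁' / P₂) * ((-1 + Real.sqrt (1 + P₂ + P₁' * P₂)) / (1 + P₁')) ^ 2 :=
  monotoneOn_sisoRelayRatio h₂.le (show -1 < P₁ by linarith)
    (show -1 < P₁' by linarith) h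
end

section
/- For each fixed P_1 > 0, the secondary rate R(P_2) = log(1 + (1 − α(P_1,P_2)) P_3) with α(P_1,P_2) as in the SISO coexistence formula and P_3 = c·P_2 for a fixed constant c > 0 (i.e., P_T scaling with fixed channels) is nondecreasing in P_T; equivalently, (1−α(P_1,P_2))·P_2 is nondecreasing in P_2. -/
/-! Writing `s = √(1 + (1 + P₁) P₂)`, the identity `s² = 1 + (1 + P₁) P₂` cancels the division
by `P₂` in `α P₂ = P₁ (s - 1)² / (1 + P₁)²`, leaving `(1 - α) P₂ = P₂ / (1 + P₁) + 2 P₁ (s - 1) / (1 + P₁)²`,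
a sum of two terms that are nondecreasing in `P₂`. -/

lemma one_sub_relay_ratio_mul_eq {a x : ℝ} (hx : x ≠ 0) (ha : 1 + a ≠ 0)
    (hs : 0 ≤ 1 + x + a * x) :
    (1 - (a / x) * ((-1 + √(1 + x + a * x)) / (1 + a)) ^ 2) * x =
      x / (1 + a) + 2 * a * (√(1 + x + a * x) - 1) / (1 + a) ^ 2 := by
  have hsq : √(1 + x + a * x) ^ 2 = 1 + x + a * x := Real.sq_sqrt hs
  field_simp
  linear_combination (-a) * hsq

lemma monotone_effective_power_closed_form {a : ℝ} (ha : 0 ≤ a) :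
    Monotone fun x : ℝ => x / (1 + a) + 2 * a * (√(1 + x + a * x) - 1) / (1 + a) ^ 2 := by
  intro x y hxy
  dsimp only
  gcongr

/-- The effective secondary power (1−α(P₁,P₂))·P₂ is nondecreasing in P₂, where
α(P₁,P₂) = (P₁/P₂)·((−1+√(1+P₂+P₁P₂))/(1+P₁))² is the SISO relay ratio. -/
theorem siso_effective_power_mono_P2 (P₁ : ℝ) (h₁ : 0 < P₁)
    (P₂ P₂' : ℝ) (h₂ : 0 < P₂) (h : P₂ ≤ P₂') :
    (1 - (P₁ / P₂) * ((-1 + Real.sqrt (1 + P₂ + P₁ * P₂)) / (1 + P₁)) ^ 2) * P₂ ≤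
      (1 - (P₁ / P₂') * ((-1 + Real.sqrt (1 + P₂' + P₁ * P₂')) / (1 + P₁)) ^ 2) * P₂' := by
  have h₂' : 0 < P₂' := h₂.trans_le h
  have hP₁ : 1 + P₁ ≠ 0 := by positivity
  rw [one_sub_relay_ratio_mul_eq h₂.ne' hP₁ (by positivity),
    one_sub_relay_ratio_mul_eq h₂'.ne' hP₁ (by positivity)]
  exact monotone_effective_power_closed_form h₁.le h
end

section
/- The function X ↦ log det(X) is concave on the cone of Hermitian positive definite n×n matrices: for positive definite A, B and t ∈ [0,1], log det(tA + (1−t)B) ≥ t·log det(A) + (1−t)·log det(B). -/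
open Matrix
open scoped ComplexOrder

/-!
Write `A = Sᴴ S` and `B = Sᴴ N S` with `N` positive definite. Then
`t A + (1 - t) B = Sᴴ (t + (1 - t) N) S`, and since `det (Sᴴ X S) = det A · det X` the claim reduces
to `(1 - t) log det N ≤ log det (t + (1 - t) N)`. Diagonalising `N`, this is the concavity
inequality `(1 - t) log μ ≤ log (t · 1 + (1 - t) μ)` summed over its eigenvalues `μ`.
-/

lemma Real.one_sub_mul_log_le_log {μ t : ℝ} (hμ : 0 < μ) (ht0 : 0 ≤ t) (ht1 : t ≤ 1) :
    (1 - t) * Real.log μ ≤ Real.log (t + (1 - t) * μ) := by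
  simpa using strictConcaveOn_log_Ioi.concaveOn.2 (Set.mem_Ioi.mpr one_pos) (Set.mem_Ioi.mpr hμ)
    ht0 (sub_nonneg.mpr ht1) (add_sub_cancel t 1)

namespace Matrix

variable {𝕜 : Type*} [RCLike 𝕜] {n : Type*}

lemma PosDef.smul_add_one_sub_smul {A B : Matrix n n 𝕜} (hA : A.PosDef) (hB : B.PosDef)
    {t : ℝ} (ht0 : 0 ≤ t) (ht1 : t ≤ 1) : ((t : 𝕜) • A + ((1 - t : ℝ) : 𝕜) • B).PosDef := by
  rcases ht0.eq_or_lt with rfl | ht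
  · simpa using hB
  · exact (hA.smul (RCLike.ofReal_pos.mpr ht)).add_posSemidef
      (hB.posSemidef.smul (RCLike.ofReal_nonneg.mpr (sub_nonneg.mpr ht1)))

variable [Fintype n] [DecidableEq n]

lemma PosDef.re_det_pos {A : Matrix n n 𝕜} (hA : A.PosDef) : 0 < RCLike.re A.det :=
  (RCLike.pos_iff.mp hA.det_pos).1

open scoped MatrixOrder in
lemma PosDef.exists_conjTranspose_mul_mul_eq {A B : Matrix n n 𝕜} (hA : A.PosDef)
    (hB : B.PosDef) : ∃ S N : Matrix n n 𝕜, N.PosDef ∧ A = Sᴴ * S ∧ B = Sᴴ * N * S := by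
  obtain ⟨S, hS, rfl⟩ :=
    CStarAlgebra.isStrictlyPositive_iff_eq_star_mul_self.mp hA.isStrictlyPositive
  lift S to (Matrix n n 𝕜)ˣ using hS
  let T : Matrix n n 𝕜 := ↑S⁻¹
  refine ⟨S, star T * B * T, (IsUnit.posDef_star_left_conjugate_iff S⁻¹.isUnit).mpr hB, rfl, ?_⟩
  rw [← star_eq_conjTranspose, ← mul_assoc, ← mul_assoc, ← star_mul, Units.inv_mul, star_one,
    one_mul, mul_assoc, Units.inv_mul, mul_one]

lemma re_det_conjTranspose_mul_mul (S X : Matrix n n 𝕜) :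
    RCLike.re (Sᴴ * X * S).det = RCLike.re (Sᴴ * S).det * RCLike.re X.det := by
  have hSS : (Sᴴ * S).det = ((‖S.det‖ ^ 2 : ℝ) : 𝕜) := by
    rw [det_mul, det_conjTranspose, RCLike.star_def, RCLike.conj_mul, RCLike.ofReal_pow]
  rw [show (Sᴴ * X * S).det = (Sᴴ * S).det * X.det by simp only [det_mul]; ring, hSS,
    RCLike.re_ofReal_mul, RCLike.ofReal_re]

lemma IsHermitian.det_cfc {A : Matrix n n 𝕜} (hA : A.IsHermitian) (f : ℝ → ℝ) :
    (cfc f A).det = ∏ i, (f (hA.eigenvalues i) : 𝕜) := by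
  simp [hA.cfc_eq, IsHermitian.cfc, -Unitary.conjStarAlgAut_apply]

lemma IsHermitian.det_smul_one_add_smul {A : Matrix n n 𝕜} (hA : A.IsHermitian) (a b : ℝ) :
    ((a : 𝕜) • 1 + (b : 𝕜) • A).det = ∏ i, ((a + b * hA.eigenvalues i : ℝ) : 𝕜) := by
  rw [← hA.det_cfc (fun x => a + b * x), cfc_const_add a (fun x => b * x) A,
    cfc_const_mul b (fun x => x) A, cfc_id' ℝ A, Algebra.algebraMap_eq_smul_one,
    RCLike.real_smul_eq_coe_smul (K := 𝕜) a, RCLike.real_smul_eq_coe_smul (K := 𝕜) b]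

lemma PosDef.one_sub_mul_log_re_det_le {N : Matrix n n 𝕜} (hN : N.PosDef) {t : ℝ}
    (ht0 : 0 ≤ t) (ht1 : t ≤ 1) :
    (1 - t) * Real.log (RCLike.re N.det) ≤
      Real.log (RCLike.re ((t : 𝕜) • 1 + ((1 - t : ℝ) : 𝕜) • N).det) := by
  have hμ := hN.eigenvalues_pos
  have hpos : ∀ i, 0 < t + (1 - t) * hN.1.eigenvalues i := fun i => by
    rcases ht0.eq_or_lt with rfl | ht
    · simpa using hμ i
    · exact add_pos_of_pos_of_nonneg ht (mul_nonneg (sub_nonneg.mpr ht1) (hμ i).le)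
  rw [hN.1.det_smul_one_add_smul, hN.1.det_eq_prod_eigenvalues, ← RCLike.ofReal_prod,
    ← RCLike.ofReal_prod, RCLike.ofReal_re, RCLike.ofReal_re,
    Real.log_prod fun i _ => (hμ i).ne', Real.log_prod fun i _ => (hpos i).ne', Finset.mul_sum]
  exact Finset.sum_le_sum fun i _ => Real.one_sub_mul_log_le_log (hμ i) ht0 ht1

end Matrix

/-- log det is concave on Hermitian positive definite matrices:
log det(tA + (1−t)B) ≥ t·log det(A) + (1−t)·log det(B). -/
theorem logDet_concave {n : ℕ}
    (A B : Matrix (Fin n) (Fin n) ℂ) (hA : A.PosDef) (hB : B.PosDef)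
    (t : ℝ) (ht0 : 0 ≤ t) (ht1 : t ≤ 1) :
    t * Real.log (A.det.re) + (1 - t) * Real.log (B.det.re) ≤
      Real.log ((((t : ℂ) • A + ((1 - t : ℝ) : ℂ) • B).det).re) := by
  obtain ⟨S, N, hN, rfl, rfl⟩ := hA.exists_conjTranspose_mul_mul_eq hB
  set X : Matrix (Fin n) (Fin n) ℂ := (t : ℂ) • 1 + ((1 - t : ℝ) : ℂ) • N
  have hX : X.PosDef := PosDef.one.smul_add_one_sub_smul hN ht0 ht1
  have hlog : (1 - t) * Real.log (RCLike.re N.det) ≤ Real.log (RCLike.re X.det) :=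
    hN.one_sub_mul_log_re_det_le ht0 ht1
  have hcomb : (t : ℂ) • (Sᴴ * S) + ((1 - t : ℝ) : ℂ) • (Sᴴ * N * S) = Sᴴ * X * S := by
    simp only [X, Matrix.mul_add, Matrix.add_mul, Matrix.mul_smul, Matrix.smul_mul, Matrix.mul_one]
  simp only [← RCLike.re_to_complex]
  rw [hcomb, re_det_conjTranspose_mul_mul, re_det_conjTranspose_mul_mul,
    Real.log_mul hA.re_det_pos.ne' hN.re_det_pos.ne',
    Real.log_mul hA.re_det_pos.ne' hX.re_det_pos.ne']
  linarith
end

section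
/- Water-filling optimality: given positive channel gains λ_1,…,λ_n and power budget P > 0, the allocation P_i = max(μ − 1/λ_i², 0) with μ chosen so that Σ P_i = P maximizes Σ_i log(1 + P_i λ_i²) over all nonnegative allocations (P_1,…,P_n) with Σ P_i ≤ P. -/
/-!
Lagrangian duality. The rate `q ↦ log (1 + q c)` is concave with slope `c / (1 + p c)` at `p`;
at the water-filling power `p = max (μ - 1/c) 0` this slope equals `1/μ` when `p > 0` and is at
most `1/μ` when `p = 0`, where only `q ≥ p` is feasible. The tangent line at `p` thus gives
`log (1 + qᵢ cᵢ) ≤ log (1 + pᵢ cᵢ) + (qᵢ - pᵢ)/μ` for every mode, and summing, the correction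
`(∑ qᵢ - ∑ pᵢ)/μ` is nonpositive because `∑ qᵢ ≤ P = ∑ pᵢ`.
-/

open Finset Real

noncomputable def waterFill (μ c : ℝ) : ℝ := max (μ - 1 / c) 0

lemma waterFill_nonneg (μ c : ℝ) : 0 ≤ waterFill μ c := le_max_right _ _

lemma Real.log_le_log_add_sub_div {a b : ℝ} (ha : 0 < a) (hb : 0 < b) :
    log a ≤ log b + (a - b) / b := by
  have htangent := log_le_sub_one_of_pos (div_pos ha hb)
  rw [log_div ha.ne' hb.ne'] at htangent
  have hrw : a / b - 1 = (a - b) / b := by field_simp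
  linarith

lemma waterFill_marginal_le {μ c q : ℝ} (hμ : 0 < μ) (hc : 0 < c) (hq : 0 ≤ q) :
    (q - waterFill μ c) * c / (1 + waterFill μ c * c) ≤ (q - waterFill μ c) / μ := by
  rcases le_or_gt μ (1 / c) with hdry | hwet
  · have hc_le : c ≤ 1 / μ := by
      rwa [le_div_iff₀ hμ, mul_comm, ← le_div_iff₀ hc]
    rw [waterFill, max_eq_right (sub_nonpos.mpr hdry)]
    calc (q - 0) * c / (1 + 0 * c) = q * c := by ring
      _ ≤ q * (1 / μ) := mul_le_mul_of_nonneg_left hc_le hq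
      _ = (q - 0) / μ := by ring
  · have hlevel : 1 + (μ - 1 / c) * c = μ * c := by field_simp; ring
    rw [waterFill, max_eq_left (sub_nonneg.mpr hwet.le), hlevel, mul_div_mul_right _ _ hc.ne']

lemma log_one_add_mul_le_waterFill {μ c q : ℝ} (hμ : 0 < μ) (hc : 0 < c) (hq : 0 ≤ q) :
    log (1 + q * c) ≤ log (1 + waterFill μ c * c) + (q - waterFill μ c) / μ := by
  have hp := waterFill_nonneg μ c
  calc log (1 + q * c)
      ≤ log (1 + waterFill μ c * c) + (1 + q * c - (1 + waterFill μ c * c)) /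
          (1 + waterFill μ c * c) :=
        log_le_log_add_sub_div (by positivity) (by positivity)
    _ = log (1 + waterFill μ c * c) + (q - waterFill μ c) * c / (1 + waterFill μ c * c) := by
        ring
    _ ≤ log (1 + waterFill μ c * c) + (q - waterFill μ c) / μ :=
        (add_le_add_iff_left _).mpr (waterFill_marginal_le hμ hc hq)

theorem water_filling_optimal_general {n : ℕ} (lam : Fin n → ℝ) (hlam : ∀ i, 0 < lam i)
    (P : ℝ) (μ : ℝ) (hμ : 0 < μ)
    (hsum : ∑ i, max (μ - 1 / (lam i) ^ 2) 0 = P)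
    (Q : Fin n → ℝ) (hQ : ∀ i, 0 ≤ Q i) (hQsum : ∑ i, Q i ≤ P) :
    ∑ i, Real.log (1 + Q i * (lam i) ^ 2) ≤
      ∑ i, Real.log (1 + max (μ - 1 / (lam i) ^ 2) 0 * (lam i) ^ 2) := by
  calc ∑ i, log (1 + Q i * lam i ^ 2)
      ≤ ∑ i, (log (1 + waterFill μ (lam i ^ 2) * lam i ^ 2)
          + (Q i - waterFill μ (lam i ^ 2)) / μ) :=
        sum_le_sum fun i _ => log_one_add_mul_le_waterFill hμ (pow_pos (hlam i) 2) (hQ i)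
    _ = ∑ i, log (1 + waterFill μ (lam i ^ 2) * lam i ^ 2) + (∑ i, Q i - P) / μ := by
        rw [sum_add_distrib, ← sum_div, sum_sub_distrib, ← hsum]
        rfl
    _ ≤ ∑ i, log (1 + waterFill μ (lam i ^ 2) * lam i ^ 2) :=
        add_le_of_nonpos_right (div_nonpos_of_nonpos_of_nonneg (by linarith) hμ.le)

/-- Water-filling optimality: the allocation Pᵢ = max(μ − 1/λᵢ², 0) with Σ Pᵢ = P
maximizes Σ log(1 + Pᵢλᵢ²) over nonnegative allocations with Σ Qᵢ ≤ P. -/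
theorem water_filling_optimal {n : ℕ} (lam : Fin n → ℝ) (hlam : ∀ i, 0 < lam i)
    (P : ℝ) (hP : 0 < P) (μ : ℝ) (hμ : 0 < μ)
    (hsum : ∑ i, max (μ - 1 / (lam i) ^ 2) 0 = P)
    (Q : Fin n → ℝ) (hQ : ∀ i, 0 ≤ Q i) (hQsum : ∑ i, Q i ≤ P) :
    ∑ i, Real.log (1 + Q i * (lam i) ^ 2) ≤
      ∑ i, Real.log (1 + max (μ - 1 / (lam i) ^ 2) 0 * (lam i) ^ 2) :=
  water_filling_optimal_general lam hlam P μ hμ hsum Q hQ hQsum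
end
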